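/- arXiv:1402.3618 — 5 statements merged into one kernel-verified Lean document; each statement's English description precedes it below -/
import Mathlib

section
/- Let C be an abelian category and V a resolving subcategory of C satisfying the syzygy hypothesis. Let g : F → G be a morphism in C where F has finite V-dimension, and let 0 → G_N → ⋯ → G_1 → G_0 → G → 0 be an exact sequence in C. Then there exist an exact sequence 0 → L_M → ⋯ → L_1 → L_0 → F → 0 with every L_i an object of V, and a morphism of chain complexes g_• : L_• → G_• (with g_i = 0 for i > N) such that g ∘ (L_0 → F) = (G_0 → G) ∘ g_0. -/
/-!
Augmenting `G'` by `ε` gives an acyclic complex `D` with `D₀ = G`. The resolution of `F` is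
built one syzygy at a time, starting from `K₀ = F` with the map `g`: given the `n`-th syzygy
`Kₙ` with a map to the cycles `Zₙ(D)`, exactness of `D` (up to refinements) and the covers
provided by `V` give an epimorphism `Lₙ ↠ Kₙ` from an object of `V` together with a lift
`Lₙ → Dₙ₊₁` of the composite to `Zₙ(D)`; then `Kₙ₊₁ = ker (Lₙ → Kₙ)` maps to `Zₙ₊₁(D)`.
The lifts form the chain map. The syzygy hypothesis, applied to this very resolution, puts
`Kₙ` in `V` for large `n`; once moreover `Dₙ = 0`, the construction takes `Kₙ` as its own
cover, so that all later syzygies and terms vanish.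
-/

open CategoryTheory CategoryTheory.Limits

variable {C : Type*} [Category C] [Abelian C]

/-- `V` is a resolving subcategory of the abelian category `C`: it is an
isomorphism-closed full subcategory (encoded as a predicate on objects) that is closed
under finite direct sums (including the empty one, i.e. it contains the zero objects),
direct summands and extensions, such that the kernel of every epimorphism between
objects of `V` lies in `V`, and such that every object of `C` admits an epimorphism
from an object of `V`. -/
structure IsResolving (V : C → Prop) : Prop where
  iso_closed : ∀ {X Y : C}, (X ≅ Y) → V X → V Y
  zero_mem : ∀ X : C, IsZero X → V X
  sum_closed : ∀ X Y : C, V X → V Y → V (X ⊞ Y)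
  summand_closed : ∀ (X Y : C) (i : Y ⟶ X) (r : X ⟶ Y), i ≫ r = 𝟙 Y → V X → V Y
  ext_closed : ∀ S : ShortComplex C, S.ShortExact → V S.X₁ → V S.X₃ → V S.X₂
  ker_of_epi_mem : ∀ S : ShortComplex C, S.ShortExact → V S.X₂ → V S.X₃ → V S.X₁
  epi_from : ∀ X : C, ∃ (P : C) (p : P ⟶ X), V P ∧ Epi p

/-- `(L, ε)` is a `V`-resolution of `M`: an exact sequence
`⋯ → L₁ → L₀ → M → 0` with all `Lᵢ` in `V`. -/
structure IsVResolution (V : C → Prop) (M : C) (L : ChainComplex C ℕ)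
    (ε : L.X 0 ⟶ M) : Prop where
  mem : ∀ n : ℕ, V (L.X n)
  epi : Epi ε
  comp_zero : L.d 1 0 ≫ ε = 0
  exact_zero : (ShortComplex.mk (L.d 1 0) ε comp_zero).Exact
  exact : ∀ n : ℕ, L.ExactAt (n + 1)

/-- `M` has finite `V`-dimension: it admits a `V`-resolution with `Lᵢ = 0`
for all large `i`. -/
def HasFiniteVDim (V : C → Prop) (M : C) : Prop :=
  ∃ (L : ChainComplex C ℕ) (ε : L.X 0 ⟶ M),
    IsVResolution V M L ε ∧ ∃ N : ℕ, ∀ n : ℕ, N < n → IsZero (L.X n)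

/-- The syzygy hypothesis: for every object `F` of finite `V`-dimension and every
`V`-resolution `E` of `F`, the cycles `ker (Eₙ₊₁ → Eₙ)` lie in `V` for all
sufficiently large `n`. -/
def SyzygyHyp (V : C → Prop) : Prop :=
  ∀ (F : C) (E : ChainComplex C ℕ) (ε : E.X 0 ⟶ F),
    HasFiniteVDim V F → IsVResolution V F E ε →
      ∃ N : ℕ, ∀ n : ℕ, N ≤ n → V (kernel (E.d (n + 1) n))

lemma CategoryTheory.ShortComplex.exact_mk_of_eq_comp_kernel_ι {X₁ X₂ X₃ Y : C}
    {f : X₁ ⟶ X₂} {g : X₂ ⟶ X₃} {w : f ≫ g = 0} (q : X₂ ⟶ Y) (p : X₁ ⟶ kernel q) [Epi p]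
    (m : Y ⟶ X₃) [Mono m] (hf : f = p ≫ kernel.ι q) (hg : g = q ≫ m) : (ShortComplex.mk f g w).Exact := by
  subst hf hg
  rw [ShortComplex.exact_iff_exact_up_to_refinements]
  intro A x₂ hx₂
  have hq : x₂ ≫ q = 0 := by rw [← cancel_mono m, Category.assoc, hx₂, zero_comp]
  obtain ⟨A', π, hπ, x₁, hx₁⟩ := surjective_up_to_refinements_of_epi p (kernel.lift q x₂ hq)
  exact ⟨A', π, hπ, x₁, by simp [reassoc_of% hx₁.symm]⟩

namespace ChainComplex

variable (G' : ChainComplex C ℕ) {G : C} (ε : G'.X 0 ⟶ G) (w : G'.d 1 0 ≫ ε = 0)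

lemma exactAt_augment [Epi ε] (h₀ : (ShortComplex.mk (G'.d 1 0) ε w).Exact)
    (h : ∀ n, G'.ExactAt (n + 1)) : ∀ n, (G'.augment ε w).ExactAt n
  | 0 => by
    rw [HomologicalComplex.exactAt_iff' _ 1 0 0 (by simp) (by simp)]
    exact (ShortComplex.exact_iff_epi _ ((G'.augment ε w).shape 0 0 (by simp))).2 ‹_›
  | 1 => by rwa [HomologicalComplex.exactAt_iff' _ 2 1 0 (by simp) (by simp)]
  | n + 2 => by
    have hn := h n
    rw [HomologicalComplex.exactAt_iff' _ (n + 2) (n + 1) n (by simp) (by simp)] at hn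
    rwa [HomologicalComplex.exactAt_iff' _ (n + 3) (n + 2) (n + 1) (by simp) (by simp)]

end ChainComplex

namespace ResolvingComparison

variable {V : C → Prop} {D : ChainComplex C ℕ}

/-- `K` is the `n`-th syzygy of the resolution under construction and `k` the comparison map
from it to the cycles of `D`. -/
structure Stage (D : ChainComplex C ℕ) (n : ℕ) where
  K : C
  k : K ⟶ D.cycles n

structure Stage.Cover (V : C → Prop) {n : ℕ} (s : Stage D n) where
  L : C
  q : L ⟶ s.K
  l : L ⟶ D.X (n + 1)
  mem : V L
  epi : Epi q
  comm : q ≫ s.k = l ≫ D.toCycles (n + 1) n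

attribute [instance] Stage.Cover.epi

lemma Stage.nonempty_cover (hV : IsResolving V) {n : ℕ} (hD : D.ExactAt n) (s : Stage D n) :
    Nonempty (s.Cover V) := by
  obtain ⟨A, π, hπ, x, hx⟩ := (D.comp_homologyπ_eq_zero_iff_up_to_refinements (n + 1) n
    (by simp) s.k).1 (hD.isZero_homology.eq_of_tgt _ _)
  obtain ⟨P, p, hP, hp⟩ := hV.epi_from A
  exact ⟨⟨P, p ≫ π, p ≫ x, hP, epi_comp p π, by rw [Category.assoc, hx, Category.assoc]⟩⟩

/-- Choosing this cover whenever possible is what makes the resolution stop. -/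
def Stage.selfCover {n : ℕ} (s : Stage D n) (hK : V s.K) (hD : IsZero (D.X n)) :
    s.Cover V :=
  ⟨s.K, 𝟙 _, 0, hK, inferInstance,
    (IsZero.of_mono (D.iCycles n) hD).eq_of_tgt _ _⟩

open Classical in
noncomputable def Stage.cover (hV : IsResolving V) (hD : ∀ n, D.ExactAt n) {n : ℕ}
    (s : Stage D n) : s.Cover V :=
  if h : V s.K ∧ IsZero (D.X n) then s.selfCover h.1 h.2
  else Classical.choice (s.nonempty_cover hV (hD n))

lemma Stage.isIso_cover_q (hV : IsResolving V) (hD : ∀ n, D.ExactAt n) {n : ℕ}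
    (s : Stage D n) (hK : V s.K) (hX : IsZero (D.X n)) : IsIso (s.cover hV hD).q := by
  rw [Stage.cover, dif_pos ⟨hK, hX⟩]
  exact inferInstanceAs (IsIso (𝟙 _))

noncomputable abbrev Stage.Cover.next {n : ℕ} {s : Stage D n} (c : s.Cover V) :
    Stage D (n + 1) :=
  ⟨kernel c.q, D.liftCycles (kernel.ι c.q ≫ c.l) n (by simp) (by
    rw [Category.assoc, ← D.toCycles_i, reassoc_of% c.comm.symm, kernel.condition_assoc,
      zero_comp])⟩

section Construction

variable (hV : IsResolving V) (hD : ∀ n, D.ExactAt n) {F : C} (g : F ⟶ D.X 0)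

-- Reducible, like `Stage.Cover.next`, so that `(stage (n + 1)).K` is seen to be
-- `kernel (cover n).q` when the differentials of `resolution` are typed.
noncomputable abbrev stage (n : ℕ) : Stage D n :=
  Nat.rec ⟨F, D.liftCycles g 0 (by simp) (by simp)⟩
    (fun _ s => (s.cover hV hD).next) n

noncomputable abbrev cover (n : ℕ) : (stage hV hD g n).Cover V :=
  (stage hV hD g n).cover hV hD

noncomputable abbrev resolution : ChainComplex C ℕ :=
  ChainComplex.of (fun n => (cover hV hD g n).L)
    (fun n => (cover hV hD g (n + 1)).q ≫ kernel.ι (cover hV hD g n).q)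
    (fun n => by rw [Category.assoc, kernel.condition_assoc, zero_comp, comp_zero])

lemma resolution_d (n : ℕ) : (resolution hV hD g).d (n + 1) n =
    (cover hV hD g (n + 1)).q ≫ kernel.ι (cover hV hD g n).q :=
  ChainComplex.of_d _ (fun n => (cover hV hD g (n + 1)).q ≫ kernel.ι (cover hV hD g n).q) n

lemma isVResolution : IsVResolution V F (resolution hV hD g) (cover hV hD g 0).q where
  mem n := (cover hV hD g n).mem
  epi := (cover hV hD g 0).epi
  comp_zero := by rw [resolution_d hV hD g 0, Category.assoc, kernel.condition, comp_zero]
  exact_zero := ShortComplex.exact_mk_of_eq_comp_kernel_ι _ (cover hV hD g 1).q (𝟙 _)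
    (resolution_d hV hD g 0) (Category.comp_id _).symm
  exact n := by
    rw [HomologicalComplex.exactAt_iff' _ (n + 2) (n + 1) n (by simp) (by simp)]
    exact ShortComplex.exact_mk_of_eq_comp_kernel_ι _ (cover hV hD g (n + 2)).q
      (kernel.ι (cover hV hD g n).q) (resolution_d hV hD g (n + 1)) (resolution_d hV hD g n)

noncomputable def comparison : resolution hV hD g ⟶ ChainComplex.truncate.obj D where
  f n := (cover hV hD g n).l
  comm' := by
    rintro _ j rfl
    have h := (cover hV hD g (j + 1)).comm =≫ D.iCycles (j + 1)
    simp only [Category.assoc, D.liftCycles_i, D.toCycles_i] at h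
    rw [resolution_d]
    exact ((Category.assoc _ _ _).trans h).symm

lemma cover_zero_q_comp : (cover hV hD g 0).q ≫ g = (comparison hV hD g).f 0 ≫ D.d 1 0 := by
  have hk : (stage hV hD g 0).k ≫ D.iCycles 0 = g := D.liftCycles_i g 0 (by simp) (by simp)
  have h := (cover hV hD g 0).comm =≫ D.iCycles 0
  simp only [Category.assoc, hk, D.toCycles_i] at h
  exact h

lemma isZero_resolution_X {N : ℕ} (hN : V (kernel ((resolution hV hD g).d (N + 1) N)))
    (hDN : ∀ n, N ≤ n → IsZero (D.X n)) (i : ℕ) (hi : N + 2 < i) :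
    IsZero ((resolution hV hD g).X i) := by
  have isIso_q (n : ℕ) (hn : N ≤ n) (hK : V (stage hV hD g n).K) : IsIso (cover hV hD g n).q :=
    (stage hV hD g n).isIso_cover_q hV hD hK (hDN n hn)
  have hK : V (stage hV hD g (N + 2)).K := by
    rw [resolution_d] at hN
    exact hV.iso_closed (kernelCompMono _ _) hN
  have isZero_succ (n : ℕ) (hn : N ≤ n) (hK : V (stage hV hD g n).K) :
      IsZero (stage hV hD g (n + 1)).K :=
    have := isIso_q n hn hK
    isZero_kernel_of_mono (cover hV hD g n).q
  have hzero (n : ℕ) (hn : N + 3 ≤ n) : IsZero (stage hV hD g n).K := by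
    induction n, hn using Nat.le_induction with
    | base => exact isZero_succ _ (by omega) hK
    | succ n hn ih => exact isZero_succ n (by omega) (hV.zero_mem _ ih)
  have := isIso_q i (by omega) (hV.zero_mem _ (hzero i hi))
  exact (hzero i hi).of_iso (asIso (cover hV hD g i).q)

end Construction

end ResolvingComparison

open ResolvingComparison

/-- Let `C` be an abelian category and `V` a resolving subcategory of `C`
satisfying the syzygy hypothesis.  Let `g : F ⟶ G` be a morphism in `C` where `F` has
finite `V`-dimension, and let `0 → G_N → ⋯ → G₁ → G₀ → G → 0` be an exact sequence in
`C`.  Then there exist an exact sequence `0 → L_M → ⋯ → L₁ → L₀ → F → 0` with every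
`Lᵢ` in `V` and a morphism of chain complexes `φ : L ⟶ G'` (with `φ.f i = 0` for
`i > N`) such that `εL ≫ g = φ.f 0 ≫ ε`. -/
theorem stmt_1 {C : Type*} [Category C] [Abelian C]
    (V : C → Prop) (hV : IsResolving V) (hSyz : SyzygyHyp V)
    {F G : C} (g : F ⟶ G) (hF : HasFiniteVDim V F)
    (G' : ChainComplex C ℕ) (N : ℕ) (hGN : ∀ i : ℕ, N < i → IsZero (G'.X i))
    (ε : G'.X 0 ⟶ G) (hε0 : G'.d 1 0 ≫ ε = 0) (hε_epi : Epi ε)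
    (hG_exact0 : (ShortComplex.mk (G'.d 1 0) ε hε0).Exact)
    (hG_exact : ∀ n : ℕ, G'.ExactAt (n + 1)) :
    ∃ (L : ChainComplex C ℕ) (εL : L.X 0 ⟶ F) (φ : L ⟶ G') (M : ℕ),
      IsVResolution V F L εL ∧
      (∀ i : ℕ, M < i → IsZero (L.X i)) ∧
      (∀ i : ℕ, N < i → φ.f i = 0) ∧
      εL ≫ g = φ.f 0 ≫ ε := by
  have hD := G'.exactAt_augment ε hε0 hG_exact0 hG_exact
  obtain ⟨N₁, hN₁⟩ := hSyz F _ _ hF (isVResolution hV hD g)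
  refine ⟨resolution hV hD g, (cover hV hD g 0).q,
    comparison hV hD g ≫ (G'.truncateAugment ε hε0).hom, max N₁ (N + 2) + 2,
    isVResolution hV hD g, isZero_resolution_X hV hD g (hN₁ _ (le_max_left _ _)) ?_,
    fun i hi => (hGN i hi).eq_of_tgt _ _, ?_⟩
  · intro n hn
    obtain ⟨m, rfl⟩ : ∃ m, n = m + 1 := ⟨n - 1, by omega⟩
    exact hGN m (by omega)
  · rw [HomologicalComplex.comp_f, ChainComplex.truncateAugment_hom_f]
    exact (cover_zero_q_comp hV hD g).trans (congrArg (· ≫ ε) (Category.comp_id _).symm)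
end

section
/- Let C be an abelian category and V a full subcategory of C such that every object of C admits an epimorphism from an object of V. Let G_• be a chain complex in C with G_i = 0 for all i < 0. Then there exist a chain complex L_• with L_i = 0 for all i < 0 and every L_i an object of V, and a quasi-isomorphism of chain complexes g_• : L_• → G_•. -/
open CategoryTheory CategoryTheory.Limits

/-!
Choose covers `p X : P X ⟶ X` with `P X ∈ V` and build `g : L ⟶ G` degree by degree, keeping
track of the cycles `Z_n ⊆ L_n`: `L_0 = P G_0`, and `L_{n+1}` covers the pullback
`Z_n ×_{G_n} G_{n+1}`, with differential `L_{n+1} → Z_n ⊆ L_n`. A cycle `y` of `G_{n+1}` gives the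
point `(0, y)` of the pullback, whose lifts are cycles of `L` mapping to `y`: `H(g)` is onto.
A cycle `z` of `L_n` with `g z = d y` gives the point `(z, y)`, whose lifts bound `z`: `H(g)` is
injective. Both chases are done up to refinements, i.e. after pulling back along epimorphisms.
-/

noncomputable section

namespace CoverResolution

variable {C : Type*} [Category C] [Abelian C] (P : C → C) (p : ∀ X, P X ⟶ X)
  (G : ChainComplex C ℕ)

/-- `K` stands for the cycles of `L_n`: the differential leaving `L_n` only exists once the next
stage is built, so its kernel has to be carried along. -/
structure Stage (n : ℕ) where
  L : C
  g : L ⟶ G.X n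
  K : C
  ι : K ⟶ L

variable {G}

abbrev Stage.nextM {n : ℕ} (s : Stage G n) : C := pullback (s.ι ≫ s.g) (G.d (n + 1) n)

variable {P}

def Stage.nextD {n : ℕ} (s : Stage G n) : P s.nextM ⟶ s.L := p _ ≫ pullback.fst _ _ ≫ s.ι

def Stage.nextG {n : ℕ} (s : Stage G n) : P s.nextM ⟶ G.X (n + 1) := p _ ≫ pullback.snd _ _

def Stage.succ {n : ℕ} (s : Stage G n) : Stage G (n + 1) where
  L := P s.nextM
  g := s.nextG p
  K := kernel (s.nextD p)
  ι := kernel.ι _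

lemma Stage.succ_nextD_comp_nextD {n : ℕ} (s : Stage G n) :
    (s.succ p).nextD p ≫ s.nextD p = 0 := by
  change (p _ ≫ pullback.fst _ _ ≫ kernel.ι (s.nextD p)) ≫ s.nextD p = 0
  simp only [Category.assoc, kernel.condition, comp_zero]

lemma Stage.nextD_comp_g {n : ℕ} (s : Stage G n) :
    s.nextD p ≫ s.g = s.nextG p ≫ G.d (n + 1) n := by
  simp only [Stage.nextD, Stage.nextG, Stage.nextM, Category.assoc, pullback.condition]

lemma Stage.exists_nextD_nextG_eq [∀ X, Epi (p X)] {n : ℕ} (s : Stage G n) {A : C}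
    (a : A ⟶ s.K) (b : A ⟶ G.X (n + 1)) (hab : a ≫ s.ι ≫ s.g = b ≫ G.d (n + 1) n) :
    ∃ (A' : C) (π : A' ⟶ A) (_ : Epi π) (x : A' ⟶ P s.nextM),
      x ≫ s.nextD p = π ≫ a ≫ s.ι ∧ x ≫ s.nextG p = π ≫ b := by
  obtain ⟨A', π, hπ, x, hx⟩ := surjective_up_to_refinements_of_epi (p _) (pullback.lift a b hab)
  refine ⟨A', π, hπ, x, ?_, ?_⟩
  · rw [Stage.nextD, ← reassoc_of% hx, pullback.lift_fst_assoc]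
  · rw [Stage.nextG, ← reassoc_of% hx, pullback.lift_snd]

variable (G)

def stage : (n : ℕ) → Stage G n
  | 0 => ⟨P (G.X 0), p _, P (G.X 0), 𝟙 _⟩
  | n + 1 => (stage n).succ p

def resolution : ChainComplex C ℕ :=
  ChainComplex.of (fun n => (stage p G n).L) (fun n => (stage p G n).nextD p)
    (fun n => (stage p G n).succ_nextD_comp_nextD p)

lemma resolution_d_succ (n : ℕ) :
    (resolution p G).d (n + 1) n = (stage p G n).nextD p :=
  ChainComplex.of_d (fun n => (stage p G n).L) (fun n => (stage p G n).nextD p) n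

def resolutionπ : resolution p G ⟶ G where
  f n := (stage p G n).g
  comm' := by
    rintro _ n rfl
    rw [resolution_d_succ]
    exact ((stage p G n).nextD_comp_g p).symm

lemma resolution_X_mem {V : C → Prop} (hP : ∀ X, V (P X)) (n : ℕ) :
    V ((resolution p G).X n) := by
  cases n <;> exact hP _

lemma resolution_d_zero (i : ℕ) : (resolution p G).d 0 i = 0 :=
  (resolution p G).shape _ _ (by simp)

lemma exists_comp_ι_eq (n : ℕ) {A : C} (z : A ⟶ (resolution p G).X n)
    (hz : z ≫ (resolution p G).d n ((ComplexShape.down ℕ).next n) = 0) :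
    ∃ w : A ⟶ (stage p G n).K, w ≫ (stage p G n).ι = z := by
  cases n with
  | zero => exact ⟨z, Category.comp_id z⟩
  | succ n =>
    rw [ChainComplex.next_nat_succ, resolution_d_succ] at hz
    exact ⟨kernel.lift _ z hz, kernel.lift_ι _ z hz⟩

variable [∀ X, Epi (p X)]

lemma mono_homologyMap_resolutionπ (n : ℕ) :
    Mono (HomologicalComplex.homologyMap (resolutionπ p G) n) := by
  rw [HomologicalComplex.mono_homologyMap_iff_up_to_refinements _ (n + 1) n _ (by simp) rfl]
  intro A x₂ hx₂ y₁ hy₁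
  obtain ⟨w, rfl⟩ := exists_comp_ι_eq p G n x₂ hx₂
  obtain ⟨A', π, hπ, x₁, hd, -⟩ :=
    (stage p G n).exists_nextD_nextG_eq p w y₁ ((Category.assoc _ _ _).symm.trans hy₁)
  exact ⟨A', π, hπ, x₁, by rw [resolution_d_succ]; exact hd.symm⟩

lemma epi_homologyMap_resolutionπ (n : ℕ) :
    Epi (HomologicalComplex.homologyMap (resolutionπ p G) n) := by
  cases n with
  | zero =>
    rw [HomologicalComplex.epi_homologyMap_iff_up_to_refinements _ 1 0 0 (by simp) (by simp)]
    intro A y₂ _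
    obtain ⟨A', π, hπ, x, hx⟩ := surjective_up_to_refinements_of_epi (p (G.X 0)) y₂
    exact ⟨A', π, hπ, x, by rw [resolution_d_zero]; exact comp_zero, 0,
      by rw [zero_comp, add_zero]; exact hx⟩
  | succ n =>
    rw [HomologicalComplex.epi_homologyMap_iff_up_to_refinements _ (n + 2) (n + 1) n
      (by simp) (by simp)]
    intro A y₂ hy₂
    obtain ⟨A', π, hπ, x, hd, hg⟩ :=
      (stage p G n).exists_nextD_nextG_eq p 0 y₂ (by simp [hy₂])
    refine ⟨A', π, hπ, x, ?_, 0, by rw [zero_comp, add_zero]; exact hg.symm⟩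
    rw [zero_comp, comp_zero] at hd
    rw [resolution_d_succ]
    exact hd

lemma quasiIso_resolutionπ : QuasiIso (resolutionπ p G) := by
  rw [quasiIso_iff]
  intro n
  rw [quasiIsoAt_iff_isIso_homologyMap]
  have := mono_homologyMap_resolutionπ p G n
  have := epi_homologyMap_resolutionπ p G n
  exact isIso_of_mono_of_epi _

end CoverResolution

end

theorem stmt_2_general {C : Type*} [Category C] [Abelian C]
    (V : C → Prop)
    (hV_epi : ∀ X : C, ∃ (P : C) (p : P ⟶ X), V P ∧ Epi p)
    (G' : ChainComplex C ℕ) :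
    ∃ (L : ChainComplex C ℕ) (g : L ⟶ G'),
      (∀ n : ℕ, V (L.X n)) ∧ QuasiIso g := by
  choose P p hP hp using hV_epi
  exact ⟨CoverResolution.resolution p G', CoverResolution.resolutionπ p G',
    CoverResolution.resolution_X_mem p G' hP, CoverResolution.quasiIso_resolutionπ p G'⟩

/-- Let `C` be an abelian category and `V` a full subcategory of `C`
(encoded as an isomorphism-closed predicate on objects) such that every object of `C`
admits an epimorphism from an object of `V`.  Let `G'` be a chain complex in `C`
concentrated in nonnegative degrees (i.e. indexed by `ℕ`).  Then there exist a chain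
complex `L` concentrated in nonnegative degrees with every term in `V` and a
quasi-isomorphism `g : L ⟶ G'`. -/
theorem stmt_2 {C : Type*} [Category C] [Abelian C]
    (V : C → Prop)
    (hV_iso : ∀ {X Y : C}, (X ≅ Y) → V X → V Y)
    (hV_epi : ∀ X : C, ∃ (P : C) (p : P ⟶ X), V P ∧ Epi p)
    (G' : ChainComplex C ℕ) :
    ∃ (L : ChainComplex C ℕ) (g : L ⟶ G'),
      (∀ n : ℕ, V (L.X n)) ∧ QuasiIso g :=
  stmt_2_general V hV_epi G'
end

section
/- Let C be an abelian category, g : F → G a morphism in C, and let F_•, G_• be chain complexes in C concentrated in nonnegative degrees, together with morphisms ε_F : F_0 → F and ε_G : G_0 → G making the augmented complexes ⋯ → F_1 → F_0 → F → 0 and ⋯ → G_1 → G_0 → G → 0 exact. Let Γ_• be the degreewise pullback of the diagram F_• → G ← G_•, where G is regarded as a chain complex concentrated in degree 0, the map F_• → G is given in degree 0 by g ∘ ε_F, and the map G_• → G is given in degree 0 by ε_G; thus Γ_0 is the pullback of g ∘ ε_F and ε_G, and Γ_i = F_i ⊕ G_i with the induced differentials for i ≥ 1. Then the canonical projection t :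 Γ_• → F_• is a quasi-isomorphism, the canonical projection u : Γ_• → G_• is a chain map, and ε_G ∘ u_0 = g ∘ ε_F ∘ t_0. -/
open CategoryTheory CategoryTheory.Limits

/-!
Via `u`, the kernel of `t` is the complex `⋯ → G'₂ → G'₁ → ker εG`: in positive degrees the
pullback is taken over zero maps, so `ker (t.f (n + 1)) ≅ G'.X (n + 1)`, and in degree `0` it
is `ker εG`. Exactness of the augmented complex `G' → G` makes this kernel acyclic, and the long
exact homology sequence of `0 → ker t → Γ → F' → 0` turns `t` into a quasi-isomorphism. The map
`t` is degreewise epi: in degree `0` as a pullback of the epimorphism `εG`, in positive degrees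
because the pullback over zero maps is a biproduct.
-/

namespace CategoryTheory.ShortComplex.ShortExact

variable {C ι : Type*} [Category C] [Abelian C] {c : ComplexShape ι}
  {S : ShortComplex (HomologicalComplex C c)}

lemma quasiIso_g (hS : S.ShortExact) (h₁ : S.X₁.Acyclic) : _root_.QuasiIso S.g := by
  rw [_root_.quasiIso_iff]
  intro i
  rw [quasiIsoAt_iff_isIso_homologyMap]
  have hz (j : ι) : IsZero (S.X₁.homology j) := (S.X₁.exactAt_iff_isZero_homology j).1 (h₁ j)
  have : Mono (HomologicalComplex.homologyMap S.g i) :=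
    (hS.homology_exact₂ i).mono_g ((hz i).eq_of_src _ _)
  have : Epi (HomologicalComplex.homologyMap S.g i) := by
    by_cases hi : ∃ j, c.Rel i j
    · obtain ⟨j, hij⟩ := hi
      exact (hS.homology_exact₃ i j hij).epi_f ((hz j).eq_of_tgt _ _)
    · have := hS.epi_g
      exact HomologicalComplex.epi_homologyMap_of_epi_of_not_rel S.g i (by simpa using hi)
  exact isIso_of_mono_of_epi _

end CategoryTheory.ShortComplex.ShortExact

lemma HomologicalComplex.exactAt_of_epi_of_isIso_of_mono {C ι : Type*} [Category C] [Abelian C]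
    {c : ComplexShape ι} {K L : HomologicalComplex C c} (φ : K ⟶ L) {i j k : ι}
    (hi : c.prev j = i) (hk : c.next j = k) [Epi (φ.f i)] [IsIso (φ.f j)] [Mono (φ.f k)]
    (hL : L.ExactAt j) : K.ExactAt j := by
  rw [K.exactAt_iff' i j k hi hk]
  rw [L.exactAt_iff' i j k hi hk] at hL
  let ψ := (shortComplexFunctor' C c i j k).map φ
  have : Epi ψ.τ₁ := ‹Epi (φ.f i)›
  have : IsIso ψ.τ₂ := ‹IsIso (φ.f j)›
  have : Mono ψ.τ₃ := ‹Mono (φ.f k)›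
  exact (ShortComplex.exact_iff_of_epi_of_isIso_of_mono ψ).2 hL

noncomputable def CategoryTheory.IsPullback.isLimitKernelForkCompSnd {C : Type*} [Category C]
    [HasZeroMorphisms C] {P X Y Z : C} {fst : P ⟶ X} {snd : P ⟶ Y} {f : X ⟶ Z} {g : Y ⟶ Z}
    (h : IsPullback fst snd f g) {c : KernelFork fst} (hc : IsLimit c) :
    IsLimit (KernelFork.ofι (f := g) (c.ι ≫ snd)
      (by rw [Category.assoc, ← h.w, c.condition_assoc, zero_comp])) :=
  KernelFork.IsLimit.ofι _ _
    (fun y hy => hc.lift (KernelFork.ofι (h.lift 0 y (by rw [zero_comp, hy]))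
      (h.lift_fst _ _ _)))
    (fun y hy => by rw [Fork.IsLimit.lift_ι_assoc, KernelFork.ι_ofι, h.lift_snd])
    (fun y hy m hm => Fork.IsLimit.hom_ext hc (h.hom_ext
      (by simp only [Category.assoc, c.condition, comp_zero])
      (by simp only [Category.assoc, Fork.IsLimit.lift_ι_assoc, KernelFork.ι_ofι, h.lift_snd,
        hm])))

lemma ChainComplex.acyclic_of_mono_zero_of_isIso_succ {C : Type*} [Category C] [Abelian C]
    {K L : ChainComplex C ℕ} (φ : K ⟶ L) [Mono (φ.f 0)] [∀ n, IsIso (φ.f (n + 1))]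
    {X : C} (ε : L.X 0 ⟶ X) (hε : L.d 1 0 ≫ ε = 0) (hφε : φ.f 0 ≫ ε = 0)
    (hL₀ : (ShortComplex.mk (L.d 1 0) ε hε).Exact) (hL : ∀ n, L.ExactAt (n + 1)) :
    K.Acyclic := by
  have (n : ℕ) : Mono (φ.f n) := by cases n <;> infer_instance
  rintro (_ | n)
  · rw [K.exactAt_iff' 1 0 0 (by simp) (by simp [ChainComplex.next_nat_zero]),
      ShortComplex.exact_iff_epi _ (K.shape 0 0 (by simp)), epi_iff_surjective_up_to_refinements]
    -- `K₀ ⊆ ker ε = im (L.d 1 0) = im (K.d 1 0)`, checked on elements up to refinement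
    intro A (y : A ⟶ K.X 0)
    obtain ⟨A', π, hπ, x, hx⟩ := hL₀.exact_up_to_refinements (y ≫ φ.f 0) (by simp [hφε])
    let e₁ : K.X 1 ≅ L.X 1 := asIso (φ.f 1)
    refine ⟨A', π, hπ, x ≫ e₁.inv, ?_⟩
    show π ≫ y = (x ≫ e₁.inv) ≫ K.d 1 0
    rw [← cancel_mono (φ.f 0), Category.assoc, hx, Category.assoc, Category.assoc, ← φ.comm]
    exact (x ≫= e₁.inv_hom_id_assoc _).symm
  · exact HomologicalComplex.exactAt_of_epi_of_isIso_of_mono φ (i := n + 2) (k := n)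
      (by simp) (by simp [ChainComplex.next_nat_succ]) (hL n)

theorem stmt_4_general {C : Type*} [Category C] [Abelian C]
    {F G : C} (g : F ⟶ G)
    (F' G' : ChainComplex C ℕ)
    (εF : F'.X 0 ⟶ F)
    (εG : G'.X 0 ⟶ G) (hG0 : G'.d 1 0 ≫ εG = 0) (hεG_epi : Epi εG)
    (hG_exact0 : (ShortComplex.mk (G'.d 1 0) εG hG0).Exact)
    (hG_exact : ∀ n : ℕ, G'.ExactAt (n + 1))
    (Γ : ChainComplex C ℕ) (t : Γ ⟶ F') (u : Γ ⟶ G')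
    (hpb0 : IsPullback (t.f 0) (u.f 0) (εF ≫ g) εG)
    (hpb : ∀ n : ℕ, IsPullback (t.f (n + 1)) (u.f (n + 1))
      (0 : F'.X (n + 1) ⟶ G) (0 : G'.X (n + 1) ⟶ G)) :
    QuasiIso t ∧ u.f 0 ≫ εG = t.f 0 ≫ εF ≫ g := by
  refine ⟨?_, hpb0.w.symm⟩
  have : Epi t := HomologicalComplex.epi_of_epi_f t fun
    | 0 => Abelian.epi_fst_of_isLimit _ _ hpb0.isLimit
    | n + 1 => epi_of_epi_fac ((hpb n).lift_fst (𝟙 _) 0 (by simp))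
  have hS : (ShortComplex.mk (kernel.ι t) t (kernel.condition t)).ShortExact :=
    { exact := ShortComplex.exact_of_f_is_kernel _ (kernelIsKernel t) }
  have hker (n : ℕ) := KernelFork.mapIsLimit _ (kernelIsKernel t) (HomologicalComplex.eval C _ n)
  have : Mono ((kernel.ι t ≫ u).f 0) :=
    mono_of_isLimit_fork (hpb0.isLimitKernelForkCompSnd (hker 0))
  have (n : ℕ) : IsIso ((kernel.ι t ≫ u).f (n + 1)) :=
    KernelFork.IsLimit.isIso_ι _ ((hpb n).isLimitKernelForkCompSnd (hker (n + 1))) rfl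
  exact hS.quasiIso_g (ChainComplex.acyclic_of_mono_zero_of_isIso_succ (kernel.ι t ≫ u) εG hG0
    (by simp [← hpb0.w, ← HomologicalComplex.comp_f_assoc]) hG_exact0 hG_exact)

/-- Let `C` be an abelian category, `g : F ⟶ G` a morphism in `C`, and
`F'`, `G'` chain complexes concentrated in nonnegative degrees with augmentations
`εF : F'.X 0 ⟶ F`, `εG : G'.X 0 ⟶ G` making the augmented complexes exact.  Let
`Γ` (with projections `t : Γ ⟶ F'` and `u : Γ ⟶ G'`) be the degreewise pullback of
`F' → G ← G'`, where `G` is regarded as a complex concentrated in degree `0`: in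
degree `0` the square over `εF ≫ g` and `εG` is a pullback, and in each degree
`n + 1` the square over the zero maps to `G` is a pullback (so that
`Γ.X (n+1) ≅ F'.X (n+1) ⊞ G'.X (n+1)`).  Then `t` is a quasi-isomorphism, `u` is a
chain map, and `u.f 0 ≫ εG = t.f 0 ≫ εF ≫ g`. -/
theorem stmt_4 {C : Type*} [Category C] [Abelian C]
    {F G : C} (g : F ⟶ G)
    (F' G' : ChainComplex C ℕ)
    (εF : F'.X 0 ⟶ F) (hF0 : F'.d 1 0 ≫ εF = 0) (hεF_epi : Epi εF)
    (hF_exact0 : (ShortComplex.mk (F'.d 1 0) εF hF0).Exact)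
    (hF_exact : ∀ n : ℕ, F'.ExactAt (n + 1))
    (εG : G'.X 0 ⟶ G) (hG0 : G'.d 1 0 ≫ εG = 0) (hεG_epi : Epi εG)
    (hG_exact0 : (ShortComplex.mk (G'.d 1 0) εG hG0).Exact)
    (hG_exact : ∀ n : ℕ, G'.ExactAt (n + 1))
    (Γ : ChainComplex C ℕ) (t : Γ ⟶ F') (u : Γ ⟶ G')
    (hpb0 : IsPullback (t.f 0) (u.f 0) (εF ≫ g) εG)
    (hpb : ∀ n : ℕ, IsPullback (t.f (n + 1)) (u.f (n + 1))
      (0 : F'.X (n + 1) ⟶ G) (0 : G'.X (n + 1) ⟶ G)) :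
    QuasiIso t ∧ u.f 0 ≫ εG = t.f 0 ≫ εF ≫ g :=
  stmt_4_general g F' G' εF εG hG0 hεG_epi hG_exact0 hG_exact Γ t u hpb0 hpb
end

section
/- Let C be an abelian category and V a full subcategory of C such that every object of C admits an epimorphism from an object of V. Let g : F → G be a morphism in C, and let F_•, G_• be chain complexes in C concentrated in nonnegative degrees, together with morphisms ε_F : F_0 → F and ε_G : G_0 → G making the augmented complexes ⋯ → F_1 → F_0 → F → 0 and ⋯ → G_1 → G_0 → G → 0 exact. Then there exist a chain complex L_• concentrated in nonnegative degrees with every term an object of V, a quasi-isomorphism τ : L_• → F_•, and a chain map γ : L_• → G_• such that ε_G ∘ γ_0 = g ∘ ε_F ∘ τ_0. -/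
/-!
Augmenting `F'` by `εF` and `G'` by `εG` turns them into acyclic complexes `A`, `B`, and `g` into
a map `A₀ ⟶ B₀`. An acyclic complex `L` with `L₀ = A₀` and chain maps `L ⟶ A`, `L ⟶ B` is built
degree by degree: the kernel of the last differential `L_{n+1} ⟶ L_n` maps to the cycles of `A`
and `B` in degree `n + 1`, which are quotients of `A_{n+2}` and `B_{n+2}`; after precomposing with
an epimorphism both maps lift (refinements), and a further epimorphism from an object of `V` gives
`L_{n+2}`, which maps onto the kernel, so `L` stays exact. Removing degree `0` yields the complex
of objects of `V`, and its map to `F'` is a quasi-isomorphism because both resolve `F`.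
-/

open CategoryTheory CategoryTheory.Limits

section

variable {C : Type*} [Category C] [Abelian C]

lemma CategoryTheory.ShortComplex.exact_of_epi_comp_kernel_ι {Y Z P : C} (g : Y ⟶ Z)
    (π : P ⟶ kernel g) [Epi π] : (ShortComplex.mk (π ≫ kernel.ι g) g (by simp)).Exact := by
  rw [ShortComplex.exact_iff_epi_kernel_lift]
  convert ‹Epi π›
  ext
  simp

lemma exists_mem_refinement_lift₂ {V : C → Prop}
    (hV_epi : ∀ X : C, ∃ (P : C) (p : P ⟶ X), V P ∧ Epi p)
    {X Y₁ Z₁ Y₂ Z₂ : C} (e₁ : Y₁ ⟶ Z₁) (e₂ : Y₂ ⟶ Z₂) [Epi e₁] [Epi e₂]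
    (f₁ : X ⟶ Z₁) (f₂ : X ⟶ Z₂) :
    ∃ (P : C) (π : P ⟶ X) (a₁ : P ⟶ Y₁) (a₂ : P ⟶ Y₂),
      V P ∧ Epi π ∧ π ≫ f₁ = a₁ ≫ e₁ ∧ π ≫ f₂ = a₂ ≫ e₂ := by
  obtain ⟨X₁, π₁, _, a₁, h₁⟩ := surjective_up_to_refinements_of_epi e₁ f₁
  obtain ⟨X₂, π₂, _, a₂, h₂⟩ := surjective_up_to_refinements_of_epi e₂ (π₁ ≫ f₂)
  obtain ⟨P, p, hP, _⟩ := hV_epi X₂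
  exact ⟨P, p ≫ π₂ ≫ π₁, p ≫ π₂ ≫ a₁, p ≫ a₂, hP, inferInstance,
    by simp [h₁], by simp [← h₂]⟩

namespace ChainComplex

lemma exactAt_zero_iff_epi (K : ChainComplex C ℕ) : K.ExactAt 0 ↔ Epi (K.d 1 0) := by
  rw [HomologicalComplex.exactAt_iff' K 1 0 0 (by simp) (by simp),
    ShortComplex.exact_iff_epi _ (K.shape 0 0 (by simp))]
  rfl

lemma exactAt_succ_iff (K : ChainComplex C ℕ) (n : ℕ) :
    K.ExactAt (n + 1) ↔ (K.sc' (n + 2) (n + 1) n).Exact :=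
  HomologicalComplex.exactAt_iff' K (n + 2) (n + 1) n (by simp) (by simp)

lemma acyclic_augment {K : ChainComplex C ℕ} {X : C} {ε : K.X 0 ⟶ X} {w : K.d 1 0 ≫ ε = 0}
    (hε : Epi ε) (h₀ : (ShortComplex.mk (K.d 1 0) ε w).Exact) (hK : ∀ n, K.ExactAt (n + 1)) :
    (K.augment ε w).Acyclic
  | 0 => (exactAt_zero_iff_epi _).2 hε
  | 1 => by
    rw [exactAt_succ_iff]
    exact h₀
  | n + 2 => by
    rw [exactAt_succ_iff]
    exact (K.exactAt_succ_iff n).1 (hK n)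

lemma quasiIso_toSingle₀ {K : ChainComplex C ℕ} {X : C} {ε : K.X 0 ⟶ X} {w : K.d 1 0 ≫ ε = 0}
    (hε : Epi ε) (h₀ : (ShortComplex.mk (K.d 1 0) ε w).Exact) (hK : ∀ n, K.ExactAt (n + 1)) :
    QuasiIso ((toSingle₀Equiv K X).symm ⟨ε, w⟩) := by
  constructor
  rintro (_ | n)
  · rw [quasiIsoAt₀_iff, ShortComplex.quasiIso_iff_of_zeros']
    rotate_left
    · exact K.shape 0 0 (by simp)
    · rfl
    · rfl
    refine (ShortComplex.exact_and_epi_g_iff_of_iso ?_).2 ⟨h₀, hε⟩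
    refine ShortComplex.isoMk (Iso.refl _) (Iso.refl _) (Iso.refl _) ?_ ?_
    all_goals
      simp only [Iso.refl_hom, HomologicalComplex.shortComplexFunctor'_obj_f,
        HomologicalComplex.shortComplexFunctor'_map_τ₂, toSingle₀Equiv_symm_apply_f_zero]
      exact (Category.id_comp _).trans (Category.comp_id _).symm
  · rw [quasiIsoAt_iff_exactAt' _ _ (exactAt_succ_single_obj _ _)]
    exact hK n

lemma quasiIso_truncateTo {K : ChainComplex C ℕ} (hK : K.Acyclic) : QuasiIso K.truncateTo :=
  quasiIso_toSingle₀ ((exactAt_zero_iff_epi K).1 (hK 0)) ((K.exactAt_succ_iff 0).1 (hK 1))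
    (fun n => ((truncate.obj K).exactAt_succ_iff n).2 ((K.exactAt_succ_iff (n + 1)).1 (hK (n + 2))))

lemma truncate_map_comp_truncateTo {K L : ChainComplex C ℕ} (φ : K ⟶ L) :
    truncate.map φ ≫ L.truncateTo = K.truncateTo ≫ (single₀ C).map (φ.f 0) := by
  ext
  simp only [truncateTo, HomologicalComplex.comp_f]
  erw [toSingle₀Equiv_symm_apply_f_zero, toSingle₀Equiv_symm_apply_f_zero, single₀_map_f_zero]
  exact φ.comm 1 0

lemma quasiIso_truncate_map {K L : ChainComplex C ℕ} (hK : K.Acyclic) (hL : L.Acyclic)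
    (φ : K ⟶ L) [IsIso (φ.f 0)] : QuasiIso (truncate.map φ) := by
  have := quasiIso_truncateTo hK
  have := quasiIso_truncateTo hL
  rw [← quasiIso_iff_comp_right _ L.truncateTo, truncate_map_comp_truncateTo]
  infer_instance

variable (V : C → Prop) (A B : ChainComplex C ℕ)

/-- The differential in degrees `n + 1 → n` of the complex under construction, with the
components of the chain maps to `A` and `B` in those degrees. -/
structure CoverStage (n : ℕ) where
  X : C
  X' : C
  d : X' ⟶ X
  φ : X ⟶ A.X n
  φ' : X' ⟶ A.X (n + 1)
  ψ : X ⟶ B.X n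
  ψ' : X' ⟶ B.X (n + 1)
  mem : V X'
  comm_φ : φ' ≫ A.d (n + 1) n = d ≫ φ
  comm_ψ : ψ' ≫ B.d (n + 1) n = d ≫ ψ

namespace CoverStage

variable {V A B} {n : ℕ}

structure Extension (s : CoverStage V A B n) where
  X : C
  d : X ⟶ s.X'
  φ : X ⟶ A.X (n + 2)
  ψ : X ⟶ B.X (n + 2)
  mem : V X
  comm_φ : φ ≫ A.d (n + 2) (n + 1) = d ≫ s.φ'
  comm_ψ : ψ ≫ B.d (n + 2) (n + 1) = d ≫ s.ψ'
  d_comp_d : d ≫ s.d = 0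
  exact : (ShortComplex.mk d s.d d_comp_d).Exact

def extend (s : CoverStage V A B n) (e : s.Extension) : CoverStage V A B (n + 1) where
  X := s.X'
  X' := e.X
  d := e.d
  φ := s.φ'
  φ' := e.φ
  ψ := s.ψ'
  ψ' := e.ψ
  mem := e.mem
  comm_φ := e.comm_φ
  comm_ψ := e.comm_ψ

lemma nonempty_extension (hV_epi : ∀ X : C, ∃ (P : C) (p : P ⟶ X), V P ∧ Epi p)
    (hA : A.Acyclic) (hB : B.Acyclic) (s : CoverStage V A B n) : Nonempty s.Extension := by
  have : Epi (kernel.lift (A.d (n + 1) n) (A.d (n + 2) (n + 1)) (A.d_comp_d _ _ _)) :=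
    ((A.exactAt_succ_iff n).1 (hA (n + 1))).epi_kernelLift
  have : Epi (kernel.lift (B.d (n + 1) n) (B.d (n + 2) (n + 1)) (B.d_comp_d _ _ _)) :=
    ((B.exactAt_succ_iff n).1 (hB (n + 1))).epi_kernelLift
  have hφ : (kernel.ι s.d ≫ s.φ') ≫ A.d (n + 1) n = 0 := by simp [s.comm_φ]
  have hψ : (kernel.ι s.d ≫ s.ψ') ≫ B.d (n + 1) n = 0 := by simp [s.comm_ψ]
  obtain ⟨P, π, a, b, hP, _, ha, hb⟩ := exists_mem_refinement_lift₂ hV_epi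
    (kernel.lift (A.d (n + 1) n) (A.d (n + 2) (n + 1)) (A.d_comp_d _ _ _))
    (kernel.lift (B.d (n + 1) n) (B.d (n + 2) (n + 1)) (B.d_comp_d _ _ _))
    (kernel.lift _ _ hφ) (kernel.lift _ _ hψ)
  exact ⟨{
    X := P
    d := π ≫ kernel.ι s.d
    φ := a
    ψ := b
    mem := hP
    comm_φ := by simpa using (ha =≫ kernel.ι _).symm
    comm_ψ := by simpa using (hb =≫ kernel.ι _).symm
    d_comp_d := by simp
    exact := ShortComplex.exact_of_epi_comp_kernel_ι s.d π }⟩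

variable (extension : ∀ {n : ℕ} (s : CoverStage V A B n), s.Extension) (s : CoverStage V A B 0)

def stages : ∀ n, CoverStage V A B n
  | 0 => s
  | n + 1 => (stages n).extend (extension (stages n))

def complex : ChainComplex C ℕ :=
  ChainComplex.of (fun n => (stages extension s n).X) (fun n => (stages extension s n).d)
    (fun n => (extension (stages extension s n)).d_comp_d)

lemma complex_d (n : ℕ) : (complex extension s).d (n + 1) n = (stages extension s n).d :=
  ChainComplex.of_d (fun n => (stages extension s n).X) (fun n => (stages extension s n).d) n

def toA : complex extension s ⟶ A where
  f n := (stages extension s n).φ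
  comm' := by
    rintro _ n rfl
    rw [complex_d]
    exact (stages extension s n).comm_φ

def toB : complex extension s ⟶ B where
  f n := (stages extension s n).ψ
  comm' := by
    rintro _ n rfl
    rw [complex_d]
    exact (stages extension s n).comm_ψ

lemma acyclic_complex [Epi s.d] : (complex extension s).Acyclic
  | 0 => (exactAt_zero_iff_epi _).2 (by rw [complex_d]; assumption)
  | n + 1 => by
    rw [exactAt_succ_iff]
    simp only [HomologicalComplex.sc', HomologicalComplex.shortComplexFunctor', complex_d]
    exact (extension (stages extension s n)).exact

end CoverStage

lemma exists_coverStage_zero {V : C → Prop}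
    (hV_epi : ∀ X : C, ∃ (P : C) (p : P ⟶ X), V P ∧ Epi p)
    {A B : ChainComplex C ℕ} (hA : A.Acyclic) (hB : B.Acyclic) (g : A.X 0 ⟶ B.X 0) :
    ∃ s : CoverStage V A B 0, Epi s.d ∧ IsIso s.φ ∧ s.ψ = s.φ ≫ g := by
  have := (exactAt_zero_iff_epi A).1 (hA 0)
  have := (exactAt_zero_iff_epi B).1 (hB 0)
  obtain ⟨P, π, a, b, hP, hπ, ha, hb⟩ := 
    exists_mem_refinement_lift₂ hV_epi (A.d 1 0) (B.d 1 0) (𝟙 _) g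
  exact ⟨⟨A.X 0, P, π, 𝟙 _, a, g, b, hP, ha.symm, hb.symm⟩, hπ, inferInstance, by simp⟩

theorem exists_acyclic_lift {V : C → Prop}
    (hV_epi : ∀ X : C, ∃ (P : C) (p : P ⟶ X), V P ∧ Epi p)
    {A B : ChainComplex C ℕ} (hA : A.Acyclic) (hB : B.Acyclic) (g : A.X 0 ⟶ B.X 0) :
    ∃ (L : ChainComplex C ℕ) (φ : L ⟶ A) (ψ : L ⟶ B),
      L.Acyclic ∧ (∀ n, V (L.X (n + 1))) ∧ IsIso (φ.f 0) ∧ ψ.f 0 = φ.f 0 ≫ g := by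
  obtain ⟨s, _, hφ, hψ⟩ := exists_coverStage_zero hV_epi hA hB g
  let extension {n : ℕ} (t : CoverStage V A B n) : t.Extension :=
    Classical.choice (t.nonempty_extension hV_epi hA hB)
  exact ⟨s.complex extension, s.toA extension, s.toB extension, s.acyclic_complex extension,
    fun n => (s.stages extension n).mem, hφ, hψ⟩

end ChainComplex

end

theorem stmt_6_general {C : Type*} [Category C] [Abelian C]
    (V : C → Prop)
    (hV_epi : ∀ X : C, ∃ (P : C) (p : P ⟶ X), V P ∧ Epi p)
    {F G : C} (g : F ⟶ G)
    (F' G' : ChainComplex C ℕ)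
    (εF : F'.X 0 ⟶ F) (hF0 : F'.d 1 0 ≫ εF = 0) (hεF_epi : Epi εF)
    (hF_exact0 : (ShortComplex.mk (F'.d 1 0) εF hF0).Exact)
    (hF_exact : ∀ n : ℕ, F'.ExactAt (n + 1))
    (εG : G'.X 0 ⟶ G) (hG0 : G'.d 1 0 ≫ εG = 0) (hεG_epi : Epi εG)
    (hG_exact0 : (ShortComplex.mk (G'.d 1 0) εG hG0).Exact)
    (hG_exact : ∀ n : ℕ, G'.ExactAt (n + 1)) :
    ∃ (L : ChainComplex C ℕ) (τ : L ⟶ F') (γ : L ⟶ G'),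
      (∀ n : ℕ, V (L.X n)) ∧ QuasiIso τ ∧
      γ.f 0 ≫ εG = τ.f 0 ≫ εF ≫ g := by
  have hA := ChainComplex.acyclic_augment hεF_epi hF_exact0 hF_exact
  have hB := ChainComplex.acyclic_augment hεG_epi hG_exact0 hG_exact
  obtain ⟨L, φ, ψ, hL, hV, _, hψ⟩ := ChainComplex.exists_acyclic_lift hV_epi hA hB g
  have := ChainComplex.quasiIso_truncate_map hL hA φ
  refine ⟨ChainComplex.truncate.obj L,
    ChainComplex.truncate.map φ ≫ (F'.truncateAugment εF hF0).hom,
    ChainComplex.truncate.map ψ ≫ (G'.truncateAugment εG hG0).hom, hV, inferInstance, ?_⟩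
  have hφ₁ := φ.comm 1 0
  have hψ₁ := ψ.comm 1 0
  simp only [ChainComplex.augment_d_one_zero] at hφ₁ hψ₁
  simp only [HomologicalComplex.comp_f, ChainComplex.truncate_map_f,
    ChainComplex.truncateAugment_hom_f]
  erw [Category.comp_id, Category.comp_id, hψ₁, hψ, ← Category.assoc, ← hφ₁, Category.assoc]
  rfl

/-- Let `C` be an abelian category and `V` a full subcategory
(an isomorphism-closed predicate on objects) such that every object of `C` admits an
epimorphism from an object of `V`.  Let `g : F ⟶ G` be a morphism in `C`, and let
`F'`, `G'` be chain complexes concentrated in nonnegative degrees with augmentations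
`εF : F'.X 0 ⟶ F` and `εG : G'.X 0 ⟶ G` making the augmented complexes exact.
Then there exist a chain complex `L` concentrated in nonnegative degrees with every
term in `V`, a quasi-isomorphism `τ : L ⟶ F'`, and a chain map `γ : L ⟶ G'` such that
`γ.f 0 ≫ εG = τ.f 0 ≫ εF ≫ g`. -/
theorem stmt_6 {C : Type*} [Category C] [Abelian C]
    (V : C → Prop)
    (hV_iso : ∀ {X Y : C}, (X ≅ Y) → V X → V Y)
    (hV_epi : ∀ X : C, ∃ (P : C) (p : P ⟶ X), V P ∧ Epi p)
    {F G : C} (g : F ⟶ G)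
    (F' G' : ChainComplex C ℕ)
    (εF : F'.X 0 ⟶ F) (hF0 : F'.d 1 0 ≫ εF = 0) (hεF_epi : Epi εF)
    (hF_exact0 : (ShortComplex.mk (F'.d 1 0) εF hF0).Exact)
    (hF_exact : ∀ n : ℕ, F'.ExactAt (n + 1))
    (εG : G'.X 0 ⟶ G) (hG0 : G'.d 1 0 ≫ εG = 0) (hεG_epi : Epi εG)
    (hG_exact0 : (ShortComplex.mk (G'.d 1 0) εG hG0).Exact)
    (hG_exact : ∀ n : ℕ, G'.ExactAt (n + 1)) :
    ∃ (L : ChainComplex C ℕ) (τ : L ⟶ F') (γ : L ⟶ G'),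
      (∀ n : ℕ, V (L.X n)) ∧ QuasiIso τ ∧
      γ.f 0 ≫ εG = τ.f 0 ≫ εF ≫ g :=
  stmt_6_general V hV_epi g F' G' εF hF0 hεF_epi hF_exact0 hF_exact εG hG0 hεG_epi hG_exact0
    hG_exact
end

section
/- Let C be an abelian category and V a resolving subcategory of C satisfying the syzygy hypothesis. If 0 → K → M → C → 0 is a short exact sequence in C in which K and C have finite V-dimension, then M has finite V-dimension. -/
open CategoryTheory CategoryTheory.Limits

variable {C : Type*} [Category C] [Abelian C]

/-
Call `M` finitely resolved if it is obtained from objects of `V` by finitely many steps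
`0 → Z → P → M → 0` with `P ∈ V`; these are exactly the objects of finite `V`-dimension.
Applied to a resolution that starts with `P → M`, the syzygy hypothesis shows that such a `Z` is
finitely resolved whenever `P ∈ V` and `M` is.

One then shows, by induction on how `A` is built, that every extension `0 → K → M → A → 0` with
`K` finitely resolved has `M` finitely resolved. Cover `M` by `q : Q ↠ M` with `Q ∈ V`.
If `A ∈ V`, then `W = ker (Q → A)` lies in `V` and is an extension of `K` by `ker q`, so `ker q`
and hence `M` are finitely resolved. If `0 → Z → P → A → 0` with `P ∈ V`, the pullback
`X = M ×_A P` is an extension of `P` by `K`, finitely resolved by the first case, and of `M`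
by `Z`. Covering `X` by `Q'`, the preimage `W'` of `Z` in `Q'` is an extension of `Z` by the
finitely resolved `ker (Q' → X)`, so it is finitely resolved by induction, and `M = Q' / W'`.
-/

namespace CategoryTheory.ShortComplex

lemma shortExact_kernelSequence {X Y : C} (f : X ⟶ Y) [Epi f] :
    (kernelSequence f).ShortExact where
  exact := kernelSequence_exact f
  epi_g := ‹Epi f›

lemma Exact.shortExact_kernel {S : ShortComplex C} (hS : S.Exact) :
    (ShortComplex.mk (kernel.ι S.f) (kernel.lift S.g S.f S.zero) (by ext; simp)).ShortExact where
  exact := by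
    rw [exact_iff_exact_up_to_refinements]
    intro A x₂ hx₂
    have hx : x₂ ≫ S.f = 0 := by simpa using hx₂ =≫ kernel.ι S.g
    exact ⟨A, 𝟙 A, inferInstance, kernel.lift S.f x₂ hx, by simp⟩
  epi_g := (exact_iff_epi_kernel_lift S).1 hS

lemma ShortExact.shortExact_of_isPullback_fst {S : ShortComplex C} (hS : S.ShortExact)
    {M P : C} {f : M ⟶ S.X₃} {fst : P ⟶ M} {snd : P ⟶ S.X₂} (h : IsPullback fst snd f S.g) :
    (ShortComplex.mk (h.lift 0 S.f (by simp)) fst (by simp)).ShortExact := by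
  have := hS.mono_f
  have := hS.epi_g
  have : Mono (h.lift 0 S.f (by simp)) := mono_of_mono_fac (h.lift_snd _ _ _)
  have : Epi fst := Abelian.epi_fst_of_isLimit _ _ h.isLimit
  refine ⟨?_⟩
  rw [exact_iff_exact_up_to_refinements]
  intro A x₂ hx₂
  have hx : (x₂ ≫ snd) ≫ S.g = 0 := by
    rw [Category.assoc, ← h.w, ← Category.assoc]
    simp [show x₂ ≫ fst = 0 from hx₂]
  exact ⟨A, 𝟙 A, inferInstance, hS.exact.lift _ hx, h.hom_ext (by simpa using hx₂) (by simp)⟩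

lemma ShortExact.shortExact_of_isPullback_snd {S : ShortComplex C} (hS : S.ShortExact) {Q P : C}
    {q : Q ⟶ S.X₂} [Epi q] {fst : P ⟶ S.X₁} {snd : P ⟶ Q} (h : IsPullback fst snd S.f q) :
    (ShortComplex.mk snd (q ≫ S.g) (by rw [← Category.assoc, ← h.w]; simp)).ShortExact := by
  have := hS.mono_f
  have := hS.epi_g
  have : Mono snd := h.mono_snd_of_mono
  refine ⟨?_⟩
  rw [exact_iff_exact_up_to_refinements]
  intro A x₂ hx₂
  have hx : (x₂ ≫ q) ≫ S.g = 0 := by simpa using hx₂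
  exact ⟨A, 𝟙 A, inferInstance, h.lift (hS.exact.lift _ hx) x₂ (by simp), by simp⟩

lemma exact_of_f_eq_epi_comp_kernel_ι {X Y Z : C} {f : X ⟶ Y} {g : Y ⟶ Z}
    (w : f ≫ g = 0) (e : X ⟶ kernel g) [he : Epi e] (hf : f = e ≫ kernel.ι g) :
    (ShortComplex.mk f g w).Exact := by
  rw [exact_iff_epi_kernel_lift]
  convert ‹Epi e›
  ext; simp [hf]

end CategoryTheory.ShortComplex

lemma ChainComplex.exactAt_succ_iff_s9 (K : ChainComplex C ℕ) (n : ℕ) :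
    K.ExactAt (n + 1) ↔
      (ShortComplex.mk (K.d (n + 2) (n + 1)) (K.d (n + 1) n) (K.d_comp_d _ _ _)).Exact :=
  K.exactAt_iff' (n + 2) (n + 1) n (by simp) (by simp [ChainComplex.next_nat_succ])

variable {V : C → Prop}

lemma exists_isVResolution (hV : IsResolving V) (M : C) :
    ∃ (L : ChainComplex C ℕ) (ε : L.X 0 ⟶ M), IsVResolution V M L ε := by
  choose P e hP he using hV.epi_from
  let L := ChainComplex.mk' (P M) (P (kernel (e M))) (e _ ≫ kernel.ι (e M))
    fun f => ⟨P (kernel f), e _ ≫ kernel.ι f, by simp⟩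
  have hd₁₀ : L.d 1 0 = e _ ≫ kernel.ι (e M) := ChainComplex.mk'_d_1_0 ..
  have hd (n : ℕ) : L.d (n + 2) (n + 1) =
      (ChainComplex.mk'XIso _ _ _ _ n).hom ≫ e _ ≫ kernel.ι (L.d (n + 1) n) :=
    ChainComplex.mk'_d ..
  -- `L.X 0` is `P M` only after unfolding `mk'`, which defeats `simp` and instance search below.
  refine ⟨L, e M, ⟨?_, he M, ?_, ?_, fun n ↦ ?_⟩⟩
  · rintro (_ | _ | n)
    · exact hP M
    · exact hP _
    · exact hV.iso_closed (ChainComplex.mk'XIso _ _ _ _ n).symm (hP _)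
  · rw [hd₁₀]
    exact (Category.assoc _ _ _).trans ((whisker_eq _ (kernel.condition (e M))).trans comp_zero)
  · exact ShortComplex.exact_of_f_eq_epi_comp_kernel_ι _ _ hd₁₀ (he := he _)
  · rw [ChainComplex.exactAt_succ_iff_s9]
    exact ShortComplex.exact_of_f_eq_epi_comp_kernel_ι _ _ ((hd n).trans (Category.assoc ..).symm)
      (he := epi_comp' inferInstance (he _))

lemma IsVResolution.augment {S : ShortComplex C} {L : ChainComplex C ℕ} {ε : L.X 0 ⟶ S.X₁}
    (hL : IsVResolution V S.X₁ L ε) (hS : S.ShortExact) (hP : V S.X₂) :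
    IsVResolution V S.X₃
      (L.augment (ε ≫ S.f) (by simp [reassoc_of% hL.comp_zero])) S.g where
  mem
    | 0 => hP
    | n + 1 => hL.mem n
  epi := hS.epi_g
  comp_zero := show (ε ≫ S.f) ≫ S.g = 0 by simp
  exact_zero := by
    have := hL.epi
    exact (ShortComplex.exact_iff_of_epi_of_isIso_of_mono (S₁ := .mk (ε ≫ S.f) S.g (by simp))
      (S₂ := S) { τ₁ := ε, τ₂ := 𝟙 _, τ₃ := 𝟙 _ }).2 hS.exact
  exact
    | 0 => by
      have := hS.mono_f
      rw [ChainComplex.exactAt_succ_iff_s9]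
      exact (ShortComplex.exact_iff_of_epi_of_isIso_of_mono
        (S₁ := .mk (L.d 1 0) ε hL.comp_zero)
        (S₂ := .mk (L.d 1 0) (ε ≫ S.f) (by simp [reassoc_of% hL.comp_zero]))
        { τ₁ := 𝟙 _, τ₂ := 𝟙 _, τ₃ := S.f }).1 hL.exact_zero
    | n + 1 => by
      rw [ChainComplex.exactAt_succ_iff_s9]
      exact (L.exactAt_succ_iff_s9 n).1 (hL.exact n)

lemma hasFiniteVDim_of_mem (hV : IsResolving V) {M : C} (hM : V M) : HasFiniteVDim V M := by
  have hX (n : ℕ) : IsZero (((ChainComplex.single₀ C).obj M).X (n + 1)) :=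
    HomologicalComplex.isZero_single_obj_X _ _ _ _ (by simp)
  refine ⟨(ChainComplex.single₀ C).obj M, 𝟙 M, ⟨?_, show Epi (𝟙 M) from inferInstance,
    (hX 0).eq_of_src _ _, ?_, ChainComplex.exactAt_succ_single_obj M⟩, 0, ?_⟩
  · rintro (_ | n)
    · exact hM
    · exact hV.zero_mem _ (hX n)
  · exact (ShortComplex.exact_iff_mono _ ((hX 0).eq_of_src _ _)).2
      (show Mono (𝟙 M) from inferInstance)
  · rintro (_ | n) hn
    · omega
    · exact hX n

inductive FinitelyResolved (V : C → Prop) : C → Prop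
  | of_mem {M : C} : V M → FinitelyResolved V M
  | of_shortExact (S : ShortComplex C) : S.ShortExact → V S.X₂ → FinitelyResolved V S.X₁ →
      FinitelyResolved V S.X₃

lemma IsVResolution.finitelyResolved_of_mem_kernel {M : C} {L : ChainComplex C ℕ}
    {ε : L.X 0 ⟶ M} (hL : IsVResolution V M L ε) {n : ℕ} (hn : V (kernel (L.d (n + 1) n))) :
    FinitelyResolved V M := by
  have := hL.epi
  have hker : FinitelyResolved V (kernel (L.d 1 0)) := by
    refine Nat.decreasingInduction
      (motive := fun k _ ↦ FinitelyResolved V (kernel (L.d (k + 1) k)))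
      (fun k _ ih ↦ ?_) (.of_mem hn) (Nat.zero_le n)
    exact .of_shortExact _ ((L.exactAt_succ_iff_s9 k).1 (hL.exact k)).shortExact_kernel
      (hL.mem (k + 2)) ih
  exact .of_shortExact _ (ShortComplex.shortExact_kernelSequence ε) (hL.mem 0)
    (.of_shortExact _ hL.exact_zero.shortExact_kernel (hL.mem 1) hker)

lemma FinitelyResolved.hasFiniteVDim (hV : IsResolving V) {M : C} (h : FinitelyResolved V M) :
    HasFiniteVDim V M := by
  induction h with
  | of_mem hM => exact hasFiniteVDim_of_mem hV hM
  | of_shortExact S hS hP _ ih =>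
    obtain ⟨L, ε, hL, N, hN⟩ := ih
    refine ⟨_, _, hL.augment hS hP, N + 1, fun n hn ↦ ?_⟩
    obtain ⟨m, rfl⟩ : ∃ m, n = m + 1 := ⟨n - 1, by omega⟩
    exact hN m (by omega)

lemma HasFiniteVDim.finitelyResolved (hV : IsResolving V) {M : C} (h : HasFiniteVDim V M) :
    FinitelyResolved V M := by
  obtain ⟨L, ε, hL, N, hN⟩ := h
  exact hL.finitelyResolved_of_mem_kernel (n := N)
    (hV.zero_mem _ ((hN (N + 1) (by omega)).of_mono (kernel.ι _)))

lemma FinitelyResolved.X₁_of_shortExact (hV : IsResolving V) (hSyz : SyzygyHyp V)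
    {S : ShortComplex C} (hS : S.ShortExact) (hP : V S.X₂)
    (h : FinitelyResolved V S.X₃) : FinitelyResolved V S.X₁ := by
  obtain ⟨L, ε, hL⟩ := exists_isVResolution hV S.X₁
  obtain ⟨N, hN⟩ := hSyz _ _ _ (h.hasFiniteVDim hV) (hL.augment hS hP)
  exact hL.finitelyResolved_of_mem_kernel (n := N) (by simpa using hN (N + 1) (by omega))

lemma FinitelyResolved.X₂_of_shortExact_of_mem (hV : IsResolving V) (hSyz : SyzygyHyp V)
    {S : ShortComplex C} (hS : S.ShortExact)
    (h₁ : FinitelyResolved V S.X₁) (h₃ : V S.X₃) : FinitelyResolved V S.X₂ := by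
  obtain ⟨Q, q, hQ, hq⟩ := hV.epi_from S.X₂
  have hK := ShortComplex.shortExact_kernelSequence q
  have hW : V (pullback S.f q) :=
    hV.ker_of_epi_mem _ (hS.shortExact_of_isPullback_snd (.of_hasPullback S.f q)) hQ h₃
  have hker := X₁_of_shortExact hV hSyz
    (hK.shortExact_of_isPullback_fst (.of_hasPullback S.f q)) hW h₁
  exact .of_shortExact _ hK hQ hker

def ExtensionsFinitelyResolved (V : C → Prop) (A : C) : Prop :=
  ∀ ⦃K M : C⦄ (f : K ⟶ M) (g : M ⟶ A) (w : f ≫ g = 0),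
    (ShortComplex.mk f g w).ShortExact → FinitelyResolved V K → FinitelyResolved V M

lemma FinitelyResolved.X₃_of_shortExact (hV : IsResolving V) (hSyz : SyzygyHyp V)
    {S : ShortComplex C} (hS : S.ShortExact)
    (h₂ : FinitelyResolved V S.X₂) (h₁ : ExtensionsFinitelyResolved V S.X₁) :
    FinitelyResolved V S.X₃ := by
  obtain ⟨Q, q, hQ, hq⟩ := hV.epi_from S.X₂
  have hK := ShortComplex.shortExact_kernelSequence q
  have hW := h₁ _ _ _ (hK.shortExact_of_isPullback_fst (.of_hasPullback S.f q))
    (X₁_of_shortExact hV hSyz hK hQ h₂)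
  apply FinitelyResolved.of_shortExact _
    (hS.shortExact_of_isPullback_snd (.of_hasPullback S.f q)) hQ hW

lemma ExtensionsFinitelyResolved.of_shortExact (hV : IsResolving V) (hSyz : SyzygyHyp V)
    {T : ShortComplex C} (hT : T.ShortExact)
    (hP : V T.X₂) (hZ : ExtensionsFinitelyResolved V T.X₁) :
    ExtensionsFinitelyResolved V T.X₃ := by
  intro K M f g w hS hK
  have hX := FinitelyResolved.X₂_of_shortExact_of_mem hV hSyz
    (hS.shortExact_of_isPullback_fst (IsPullback.of_hasPullback g T.g).flip) hK hP
  exact .X₃_of_shortExact hV hSyz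
    (hT.shortExact_of_isPullback_fst (.of_hasPullback g T.g)) hX hZ

lemma FinitelyResolved.extensionsFinitelyResolved (hV : IsResolving V) (hSyz : SyzygyHyp V)
    {A : C} (hA : FinitelyResolved V A) :
    ExtensionsFinitelyResolved V A := by
  induction hA with
  | of_mem hA => exact fun K M f g w hS hK ↦ X₂_of_shortExact_of_mem hV hSyz hS hK hA
  | of_shortExact T hT hP _ ih => exact .of_shortExact hV hSyz hT hP ih

/-- Let `C` be an abelian category and `V` a resolving subcategory of
`C` satisfying the syzygy hypothesis.  If `0 → K → M → Co → 0` is a short exact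
sequence in `C` in which `K` and `Co` have finite `V`-dimension, then `M` has
finite `V`-dimension. -/
theorem stmt_9 {C : Type*} [Category C] [Abelian C]
    (V : C → Prop) (hV : IsResolving V) (hSyz : SyzygyHyp V)
    (S : ShortComplex C) (hS : S.ShortExact)
    (hK : HasFiniteVDim V S.X₁) (hCo : HasFiniteVDim V S.X₃) :
    HasFiniteVDim V S.X₂ :=
  ((hCo.finitelyResolved hV).extensionsFinitelyResolved hV hSyz S.f S.g S.zero hS
    (hK.finitelyResolved hV)).hasFiniteVDim hV
end
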